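/- arXiv:2106.12310 — 6 statements merged into one kernel-verified Lean document; each statement's English description precedes it below -/
import Mathlib

section
/- Let X be a smooth divergence-free vector field on ℝⁿ (div X = 0 identically) and let Y be a smooth vector field that is an infinitesimal symmetry of X, i.e. [Y,X] = 0. Then div Y is a first integral of X, i.e. X(div Y) = 0 identically. -/
/-- The divergence of a vector field on ℝⁿ: the trace of its Fréchet derivative. -/
noncomputable def vdiv {n : ℕ} (X : (Fin n → ℝ) → (Fin n → ℝ)) (x : Fin n → ℝ) : ℝ :=
  LinearMap.trace ℝ (Fin n → ℝ) (fderiv ℝ X x : (Fin n → ℝ) →ₗ[ℝ] (Fin n → ℝ))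

/-- The Lie bracket of vector fields: [X,Y](x) = DY(x)(X(x)) − DX(x)(Y(x)). -/
noncomputable def lieBracket {n : ℕ} (X Y : (Fin n → ℝ) → (Fin n → ℝ))
    (x : Fin n → ℝ) : Fin n → ℝ :=
  fderiv ℝ Y x (X x) - fderiv ℝ X x (Y x)

open ContinuousLinearMap in
lemma trace_eq_sum' {n : ℕ} (f : (Fin n → ℝ) →L[ℝ] (Fin n → ℝ)) :
    LinearMap.trace ℝ (Fin n → ℝ) (f : (Fin n → ℝ) →ₗ[ℝ] (Fin n → ℝ)) =
      ∑ i, f (Pi.basisFun ℝ (Fin n) i) i := by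
  rw [LinearMap.trace_eq_matrix_trace ℝ (Pi.basisFun ℝ (Fin n))]
  unfold Matrix.trace
  congr 1
  ext i
  simp [Matrix.diag, LinearMap.toMatrix_apply]

lemma div_deriv' {n : ℕ} (Z : (Fin n → ℝ) → (Fin n → ℝ)) (hZ : ContDiff ℝ (⊤ : ℕ∞) Z)
    (x v : Fin n → ℝ) :
    fderiv ℝ (vdiv Z) x v =
      ∑ i, fderiv ℝ (fderiv ℝ Z) x v (Pi.basisFun ℝ (Fin n) i) i := by
  classical
  have hfun : vdiv Z = fun y => ∑ i, fderiv ℝ Z y (Pi.basisFun ℝ (Fin n) i) i :=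
    funext fun y => trace_eq_sum' _
  have hZ1 : ContDiff ℝ (⊤ : ℕ∞) (fderiv ℝ Z) := hZ.fderiv_right (by simp)
  have hfd : HasFDerivAt (fderiv ℝ Z) (fderiv ℝ (fderiv ℝ Z) x) x :=
    (hZ1.differentiable (by simp) x).hasFDerivAt
  have hi : ∀ i ∈ Finset.univ, HasFDerivAt
      (fun y => fderiv ℝ Z y (Pi.basisFun ℝ (Fin n) i) i)
      (((ContinuousLinearMap.proj (R := ℝ) (φ := fun _ : Fin n => ℝ) i).comp
        (ContinuousLinearMap.apply ℝ (Fin n → ℝ) (Pi.basisFun ℝ (Fin n) i))).comp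
        (fderiv ℝ (fderiv ℝ Z) x)) x := fun i _ =>
    (((ContinuousLinearMap.proj (R := ℝ) (φ := fun _ : Fin n => ℝ) i).comp
        (ContinuousLinearMap.apply ℝ (Fin n → ℝ) (Pi.basisFun ℝ (Fin n) i))).hasFDerivAt).comp x hfd
  have hsum := HasFDerivAt.fun_sum hi
  rw [hfun, hsum.fderiv]
  simp [ContinuousLinearMap.sum_apply]

/-- If `X` is a smooth divergence-free vector field on ℝⁿ and `Y` is a smooth
vector field with `[Y,X] = 0`, then `div Y` is a first integral of `X`: `X(div Y) = 0`. -/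
theorem stmt_1 {n : ℕ} (X Y : (Fin n → ℝ) → (Fin n → ℝ))
    (hX : ContDiff ℝ (⊤ : ℕ∞) X) (hY : ContDiff ℝ (⊤ : ℕ∞) Y)
    (hdivX : ∀ x, vdiv X x = 0)
    (hsym : ∀ x, lieBracket Y X x = 0) :
    ∀ x : Fin n → ℝ, fderiv ℝ (vdiv Y) x (X x) = 0 := by
  classical
  intro x
  set e := Pi.basisFun ℝ (Fin n) with he
  have hXd : Differentiable ℝ X := hX.differentiable (by simp)
  have hYd : Differentiable ℝ Y := hY.differentiable (by simp)
  have hX1 : ContDiff ℝ (⊤ : ℕ∞) (fderiv ℝ X) := hX.fderiv_right (by simp)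
  have hY1 : ContDiff ℝ (⊤ : ℕ∞) (fderiv ℝ Y) := hY.fderiv_right (by simp)
  have hX1d : Differentiable ℝ (fderiv ℝ X) := hX1.differentiable (by simp)
  have hY1d : Differentiable ℝ (fderiv ℝ Y) := hY1.differentiable (by simp)
  set X'' := fderiv ℝ (fderiv ℝ X) x with hX''
  set Y'' := fderiv ℝ (fderiv ℝ Y) x with hY''
  -- symmetry of second derivatives
  have hsymX : ∀ v w, X'' v w = X'' w v :=
    second_derivative_symmetric (fun y => (hXd y).hasFDerivAt) (hX1d x).hasFDerivAt
  have hsymY : ∀ v w, Y'' v w = Y'' w v :=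
    second_derivative_symmetric (fun y => (hYd y).hasFDerivAt) (hY1d x).hasFDerivAt
  -- the functions y ↦ DX_y(Y y) and y ↦ DY_y(X y) agree
  have hFG : (fun y => fderiv ℝ X y (Y y)) = (fun y => fderiv ℝ Y y (X y)) := by
    funext y
    have := hsym y
    unfold lieBracket at this
    exact sub_eq_zero.mp this
  have hF : HasFDerivAt (fun y => fderiv ℝ X y (Y y))
      ((fderiv ℝ X x).comp (fderiv ℝ Y x) + X''.flip (Y x)) x :=
    (hX1d x).hasFDerivAt.clm_apply (hYd x).hasFDerivAt
  have hG : HasFDerivAt (fun y => fderiv ℝ Y y (X y))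
      ((fderiv ℝ Y x).comp (fderiv ℝ X x) + Y''.flip (X x)) x :=
    (hY1d x).hasFDerivAt.clm_apply (hXd x).hasFDerivAt
  rw [hFG] at hF
  have heq := hF.unique hG
  -- trace commutativity
  have hcomm : ∑ i, ((fderiv ℝ X x).comp (fderiv ℝ Y x)) (e i) i
      = ∑ i, ((fderiv ℝ Y x).comp (fderiv ℝ X x)) (e i) i := by
    rw [← trace_eq_sum', ← trace_eq_sum']
    simp only [ContinuousLinearMap.toLinearMap_comp, ← Module.End.mul_eq_comp]
    exact LinearMap.trace_mul_comm ℝ _ _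
  -- sum the equality of derivatives applied to basis vectors
  have hsum : ∑ i, X'' (e i) (Y x) i = ∑ i, Y'' (e i) (X x) i := by
    have h : ∀ i : Fin n,
        ((fderiv ℝ X x).comp (fderiv ℝ Y x)) (e i) i + X'' (e i) (Y x) i
          = ((fderiv ℝ Y x).comp (fderiv ℝ X x)) (e i) i + Y'' (e i) (X x) i := by
      intro i
      have := congrArg (fun L : (Fin n → ℝ) →L[ℝ] (Fin n → ℝ) => L (e i) i) heq
      simpa [ContinuousLinearMap.add_apply, ContinuousLinearMap.flip_apply] using this
    have h2 : ∑ i, (((fderiv ℝ X x).comp (fderiv ℝ Y x)) (e i) i + X'' (e i) (Y x) i)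
        = ∑ i, (((fderiv ℝ Y x).comp (fderiv ℝ X x)) (e i) i + Y'' (e i) (X x) i) :=
      Finset.sum_congr rfl fun i _ => h i
    rw [Finset.sum_add_distrib, Finset.sum_add_distrib, hcomm] at h2
    linarith [h2]
  -- X-side vanishes since vdiv X ≡ 0
  have hXzero : ∑ i, X'' (Y x) (e i) i = 0 := by
    have := div_deriv' X hX x (Y x)
    have hconst : vdiv X = fun _ => (0 : ℝ) := funext hdivX
    rw [hconst] at this
    simp only [fderiv_const_apply, Pi.zero_apply, ContinuousLinearMap.zero_apply] at this
    rw [hX'']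
    linarith [this]
  calc fderiv ℝ (vdiv Y) x (X x) = ∑ i, Y'' (X x) (e i) i := div_deriv' Y hY x (X x)
    _ = ∑ i, Y'' (e i) (X x) i := Finset.sum_congr rfl fun i _ => by rw [hsymY]
    _ = ∑ i, X'' (e i) (Y x) i := hsum.symm
    _ = ∑ i, X'' (Y x) (e i) i := Finset.sum_congr rfl fun i _ => by rw [hsymX]
    _ = 0 := hXzero
end

section
/- Let X and Y be smooth vector fields on ℝⁿ with [X,Y] = 0, and let R be a Jacobi multiplier for X. Then the function I = div Y + Y(log R) is a first integral of X, i.e. X(div Y + Y(log R)) = 0 identically. -/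
/-- Trace as a continuous linear map on continuous endomorphisms of ℝⁿ. -/
noncomputable def traceCLM (n : ℕ) : ((Fin n → ℝ) →L[ℝ] (Fin n → ℝ)) →L[ℝ] ℝ :=
  LinearMap.toContinuousLinearMap
    ((LinearMap.trace ℝ (Fin n → ℝ)).comp (ContinuousLinearMap.coeLM ℝ))

lemma traceCLM_apply {n : ℕ} (A : (Fin n → ℝ) →L[ℝ] (Fin n → ℝ)) :
    traceCLM n A = LinearMap.trace ℝ (Fin n → ℝ) (A : (Fin n → ℝ) →ₗ[ℝ] (Fin n → ℝ)) := rfl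

lemma traceCLM_comp_comm {n : ℕ} (A B : (Fin n → ℝ) →L[ℝ] (Fin n → ℝ)) :
    traceCLM n (A.comp B) = traceCLM n (B.comp A) := by
  simp only [traceCLM_apply, ContinuousLinearMap.coe_comp]
  exact LinearMap.trace_mul_comm ℝ (A : (Fin n → ℝ) →ₗ[ℝ] (Fin n → ℝ)) (B : (Fin n → ℝ) →ₗ[ℝ] (Fin n → ℝ))

lemma vdiv_eq_traceCLM {n : ℕ} (Z : (Fin n → ℝ) → (Fin n → ℝ)) (x : Fin n → ℝ) :
    vdiv Z x = traceCLM n (fderiv ℝ Z x) := rfl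

/-- The second derivative of a smooth function, as `HasFDerivAt` of `fderiv`. -/
lemma sd_aux {E F : Type*} [NormedAddCommGroup E] [NormedSpace ℝ E]
    [NormedAddCommGroup F] [NormedSpace ℝ F] {f : E → F} (hf : ContDiff ℝ (⊤ : ℕ∞) f) (x : E) :
    HasFDerivAt (fderiv ℝ f) (fderiv ℝ (fderiv ℝ f) x) x :=
  (((hf.fderiv_right (m := (⊤ : ℕ∞)) ((by simp))).differentiable (by simp)) x).hasFDerivAt

/-- Symmetry of the second derivative of a smooth function. -/
lemma sym_aux {E F : Type*} [NormedAddCommGroup E] [NormedSpace ℝ E]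
    [NormedAddCommGroup F] [NormedSpace ℝ F] {f : E → F} (hf : ContDiff ℝ (⊤ : ℕ∞) f) (x v w : E) :
    fderiv ℝ (fderiv ℝ f) x v w = fderiv ℝ (fderiv ℝ f) x w v :=
  second_derivative_symmetric (fun y => ((hf.differentiable (by simp)) y).hasFDerivAt)
    (sd_aux hf x) v w

lemma vdiv_hasFDerivAt {n : ℕ} {Z : (Fin n → ℝ) → (Fin n → ℝ)} (hZ : ContDiff ℝ (⊤ : ℕ∞) Z)
    (x : Fin n → ℝ) :
    HasFDerivAt (vdiv Z) ((traceCLM n).comp (fderiv ℝ (fderiv ℝ Z) x)) x :=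
  (traceCLM n).hasFDerivAt.comp x (sd_aux hZ x)

/-- If `X` and `Y` are smooth vector fields on ℝⁿ with `[X,Y] = 0` and `R` is a
Jacobi multiplier for `X` (`R` smooth and positive with `X(R) + R·div X = 0`), then
`I = div Y + Y(log R)` is a first integral of `X`. -/
theorem stmt_2 {n : ℕ} (X Y : (Fin n → ℝ) → (Fin n → ℝ)) (R : (Fin n → ℝ) → ℝ)
    (hX : ContDiff ℝ (⊤ : ℕ∞) X) (hY : ContDiff ℝ (⊤ : ℕ∞) Y) (hR : ContDiff ℝ (⊤ : ℕ∞) R)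
    (hRpos : ∀ x, 0 < R x)
    (hcomm : ∀ x, lieBracket X Y x = 0)
    (hJacobi : ∀ x, fderiv ℝ R x (X x) + R x * vdiv X x = 0) :
    ∀ x : Fin n → ℝ,
      fderiv ℝ (fun y => vdiv Y y + fderiv ℝ (fun z => Real.log (R z)) y (Y y)) x (X x) = 0 := by
  intro x
  set g : (Fin n → ℝ) → ℝ := fun z => Real.log (R z) with hgdef
  have hg : ContDiff ℝ (⊤ : ℕ∞) g := hR.log fun z => (hRpos z).ne'
  have hc : ∀ y, fderiv ℝ Y y (X y) = fderiv ℝ X y (Y y) := by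
    intro y
    have := hcomm y
    rw [lieBracket, sub_eq_zero] at this
    exact this
  -- X(log R) = - div X
  have hφ : (fun y => fderiv ℝ g y (X y)) = fun y => -vdiv X y := by
    funext y
    have hlog : HasFDerivAt g ((R y)⁻¹ • fderiv ℝ R y) y :=
      ((hR.differentiable (by simp)) y).hasFDerivAt.log (hRpos y).ne'
    rw [hlog.fderiv]
    have hJ := hJacobi y
    have hr : R y ≠ 0 := (hRpos y).ne'
    simp only [ContinuousLinearMap.smul_apply, smul_eq_mul]
    field_simp
    linarith
  -- derivative of the (vanishing) Lie bracket
  have hbr : HasFDerivAt (fun y => fderiv ℝ Y y (X y) - fderiv ℝ X y (Y y))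
      (((fderiv ℝ Y x).comp (fderiv ℝ X x) + (fderiv ℝ (fderiv ℝ Y) x).flip (X x)) -
        ((fderiv ℝ X x).comp (fderiv ℝ Y x) + (fderiv ℝ (fderiv ℝ X) x).flip (Y x))) x :=
    ((sd_aux hY x).clm_apply ((hX.differentiable (by simp)) x).hasFDerivAt).sub
      ((sd_aux hX x).clm_apply ((hY.differentiable (by simp)) x).hasFDerivAt)
  have hzero : HasFDerivAt (fun y => fderiv ℝ Y y (X y) - fderiv ℝ X y (Y y))
      (0 : (Fin n → ℝ) →L[ℝ] (Fin n → ℝ)) x := by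
    have hfun : (fun y => fderiv ℝ Y y (X y) - fderiv ℝ X y (Y y))
        = fun _ => (0 : Fin n → ℝ) := by
      funext y; rw [sub_eq_zero]; exact hc y
    rw [hfun]; exact hasFDerivAt_const 0 x
  have hbr0 : ((fderiv ℝ Y x).comp (fderiv ℝ X x) + (fderiv ℝ (fderiv ℝ Y) x).flip (X x))
      = ((fderiv ℝ X x).comp (fderiv ℝ Y x) + (fderiv ℝ (fderiv ℝ X) x).flip (Y x)) :=
    sub_eq_zero.mp (hbr.unique hzero)
  -- trace consequence: trace(D²Y·Xx) = trace(D²X·Yx)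
  have htr : traceCLM n ((fderiv ℝ (fderiv ℝ Y) x).flip (X x))
      = traceCLM n ((fderiv ℝ (fderiv ℝ X) x).flip (Y x)) := by
    have h := congrArg (traceCLM n) hbr0
    simp only [map_add] at h
    have hcm := traceCLM_comp_comm (fderiv ℝ Y x) (fderiv ℝ X x)
    linarith
  have hflipY : (fderiv ℝ (fderiv ℝ Y) x).flip (X x) = fderiv ℝ (fderiv ℝ Y) x (X x) :=
    ContinuousLinearMap.ext fun w => sym_aux hY x w (X x)
  have hflipX : (fderiv ℝ (fderiv ℝ X) x).flip (Y x) = fderiv ℝ (fderiv ℝ X) x (Y x) :=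
    ContinuousLinearMap.ext fun w => sym_aux hX x w (Y x)
  -- derivatives of Y(log R) and X(log R)
  have hψ : HasFDerivAt (fun y => fderiv ℝ g y (Y y))
      ((fderiv ℝ g x).comp (fderiv ℝ Y x) + (fderiv ℝ (fderiv ℝ g) x).flip (Y x)) x :=
    (sd_aux hg x).clm_apply ((hY.differentiable (by simp)) x).hasFDerivAt
  have hφ1 : HasFDerivAt (fun y => fderiv ℝ g y (X y))
      ((fderiv ℝ g x).comp (fderiv ℝ X x) + (fderiv ℝ (fderiv ℝ g) x).flip (X x)) x :=
    (sd_aux hg x).clm_apply ((hX.differentiable (by simp)) x).hasFDerivAt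
  have hφ2 : HasFDerivAt (fun y => fderiv ℝ g y (X y))
      (-((traceCLM n).comp (fderiv ℝ (fderiv ℝ X) x))) x := by
    rw [hφ]
    exact (vdiv_hasFDerivAt hX x).neg
  have hφeq := hφ1.unique hφ2
  -- total derivative of the sum
  have hsum : HasFDerivAt (fun y => vdiv Y y + fderiv ℝ g y (Y y))
      (((traceCLM n).comp (fderiv ℝ (fderiv ℝ Y) x)) +
        ((fderiv ℝ g x).comp (fderiv ℝ Y x) + (fderiv ℝ (fderiv ℝ g) x).flip (Y x))) x :=
    (vdiv_hasFDerivAt hY x).add hψ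
  rw [hsum.fderiv]
  have hφeq' := congrArg (fun (T : (Fin n → ℝ) →L[ℝ] ℝ) => T (Y x)) hφeq
  simp only [ContinuousLinearMap.add_apply, ContinuousLinearMap.coe_comp', Function.comp_apply,
    ContinuousLinearMap.flip_apply, ContinuousLinearMap.neg_apply] at hφeq' ⊢
  -- use symmetry of D²g and commutation of X, Y
  have hsymg : fderiv ℝ (fderiv ℝ g) x (X x) (Y x) = fderiv ℝ (fderiv ℝ g) x (Y x) (X x) :=
    sym_aux hg x (X x) (Y x)
  rw [← hflipY, ← hflipX] at *
  rw [hc x]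
  -- now combine everything
  have h1 : traceCLM n ((fderiv ℝ (fderiv ℝ Y) x).flip (X x))
      = traceCLM n ((fderiv ℝ (fderiv ℝ X) x).flip (Y x)) := htr
  linarith [htr, hφeq', hsymg]
end

section
/- Let X be a smooth divergence-free vector field on ℝⁿ (div X = 0 identically) and let Y be a smooth vector field that is an infinitesimal symmetry of the one-dimensional distribution generated by X, i.e. [Y,X] = h·X for some smooth function h : ℝⁿ → ℝ. Then the function div Y + h is a first integral of X, i.e. X(div Y + h) = 0 identically. -/
/-- Trace as a continuous linear map on continuous endomorphisms of ℝⁿ. -/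
noncomputable def trC (n : ℕ) : ((Fin n → ℝ) →L[ℝ] (Fin n → ℝ)) →L[ℝ] ℝ :=
  LinearMap.toContinuousLinearMap
    ((LinearMap.trace ℝ (Fin n → ℝ)).comp (ContinuousLinearMap.coeLM ℝ))

lemma trC_apply {n : ℕ} (T : (Fin n → ℝ) →L[ℝ] (Fin n → ℝ)) :
    trC n T = LinearMap.trace ℝ (Fin n → ℝ) (T : (Fin n → ℝ) →ₗ[ℝ] (Fin n → ℝ)) := rfl

lemma trace_smulRight' {n : ℕ} (φ : (Fin n → ℝ) →ₗ[ℝ] ℝ) (w : Fin n → ℝ) :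
    LinearMap.trace ℝ (Fin n → ℝ) (LinearMap.smulRight φ w) = φ w := by
  have : LinearMap.smulRight φ w = dualTensorHom ℝ (Fin n → ℝ) (Fin n → ℝ) (φ ⊗ₜ w) := by
    ext v; simp
  rw [this, LinearMap.trace_eq_contract_apply, contractLeft_apply]

/-- If `X` is a smooth divergence-free vector field on ℝⁿ and `Y` is a smooth
vector field with `[Y,X] = h·X` for some smooth `h`, then `div Y + h` is a first integral
of `X`. -/
theorem stmt_3 {n : ℕ} (X Y : (Fin n → ℝ) → (Fin n → ℝ)) (h : (Fin n → ℝ) → ℝ)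
    (hX : ContDiff ℝ (⊤ : ℕ∞) X) (hY : ContDiff ℝ (⊤ : ℕ∞) Y) (hh : ContDiff ℝ (⊤ : ℕ∞) h)
    (hdivX : ∀ x, vdiv X x = 0)
    (hnorm : ∀ x, lieBracket Y X x = h x • X x) :
    ∀ x : Fin n → ℝ, fderiv ℝ (fun y => vdiv Y y + h y) x (X x) = 0 := by
  intro x
  have hXd : Differentiable ℝ X := hX.differentiable (by simp)
  have hYd : Differentiable ℝ Y := hY.differentiable (by simp)
  have hhd : Differentiable ℝ h := hh.differentiable (by simp)
  have hDX : Differentiable ℝ (fderiv ℝ X) :=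
    (hX.fderiv_right (m := (⊤ : ℕ∞)) (by simp)).differentiable (by simp)
  have hDY : Differentiable ℝ (fderiv ℝ Y) :=
    (hY.fderiv_right (m := (⊤ : ℕ∞)) (by simp)).differentiable (by simp)
  -- divergence as a composition with trC
  have hvd : ∀ Z : (Fin n → ℝ) → (Fin n → ℝ), vdiv Z = fun y => trC n (fderiv ℝ Z y) :=
    fun Z => rfl
  have hfvY : fderiv ℝ (vdiv Y) x = (trC n).comp (fderiv ℝ (fderiv ℝ Y) x) := by
    rw [hvd]
    exact (((trC n).hasFDerivAt).comp x (hDY x).hasFDerivAt).fderiv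
  have hfvX : fderiv ℝ (vdiv X) x = (trC n).comp (fderiv ℝ (fderiv ℝ X) x) := by
    rw [hvd]
    exact (((trC n).hasFDerivAt).comp x (hDX x).hasFDerivAt).fderiv
  have hvX0 : fderiv ℝ (vdiv X) x = 0 := by
    have : vdiv X = fun _ => (0 : ℝ) := funext hdivX
    rw [this, fderiv_fun_const]; rfl
  -- differentiate the normalizer identity
  have key : (fun y => fderiv ℝ X y (Y y) - fderiv ℝ Y y (X y)) = fun y => h y • X y := by
    funext y; exact hnorm y
  have hd1 : DifferentiableAt ℝ (fun y => fderiv ℝ X y (Y y)) x := (hDX x).clm_apply (hYd x)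
  have hd2 : DifferentiableAt ℝ (fun y => fderiv ℝ Y y (X y)) x := (hDY x).clm_apply (hXd x)
  have keyD : fderiv ℝ (fun y => fderiv ℝ X y (Y y) - fderiv ℝ Y y (X y)) x
      = fderiv ℝ (fun y => h y • X y) x := by rw [key]
  rw [fderiv_fun_sub hd1 hd2, fderiv_clm_apply (hDX x) (hYd x), fderiv_clm_apply (hDY x) (hXd x),
    fderiv_fun_smul (hhd x) (hXd x)] at keyD
  -- apply the trace to both sides
  have keyT := congrArg (fun T => trC n T) keyD
  simp only [map_sub, map_add] at keyT
  -- compute each trace term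
  have t1 : trC n ((fderiv ℝ X x).comp (fderiv ℝ Y x))
      = trC n ((fderiv ℝ Y x).comp (fderiv ℝ X x)) := by
    rw [trC_apply, trC_apply, ContinuousLinearMap.toLinearMap_comp, ContinuousLinearMap.toLinearMap_comp]
    exact LinearMap.trace_comp_comm' _ _
  -- symmetry of second derivatives
  have symX : (fderiv ℝ (fderiv ℝ X) x).flip (Y x) = fderiv ℝ (fderiv ℝ X) x (Y x) := by
    refine ContinuousLinearMap.ext fun v => ?_
    exact second_derivative_symmetric (fun y => (hXd y).hasFDerivAt) (hDX x).hasFDerivAt _ _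
  have symY : (fderiv ℝ (fderiv ℝ Y) x).flip (X x) = fderiv ℝ (fderiv ℝ Y) x (X x) := by
    refine ContinuousLinearMap.ext fun v => ?_
    exact second_derivative_symmetric (fun y => (hYd y).hasFDerivAt) (hDY x).hasFDerivAt _ _
  have t2 : trC n ((fderiv ℝ (fderiv ℝ X) x).flip (Y x)) = 0 := by
    rw [symX]
    have : trC n (fderiv ℝ (fderiv ℝ X) x (Y x))
        = ((trC n).comp (fderiv ℝ (fderiv ℝ X) x)) (Y x) := rfl
    rw [this, ← hfvX, hvX0]; rfl
  have t3 : trC n ((fderiv ℝ (fderiv ℝ Y) x).flip (X x)) = fderiv ℝ (vdiv Y) x (X x) := by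
    rw [symY]
    have : trC n (fderiv ℝ (fderiv ℝ Y) x (X x))
        = ((trC n).comp (fderiv ℝ (fderiv ℝ Y) x)) (X x) := rfl
    rw [this, ← hfvY]
  have t4 : trC n (h x • fderiv ℝ X x) = 0 := by
    rw [trC_apply, ContinuousLinearMap.coe_smul, map_smul, smul_eq_mul]
    have : LinearMap.trace ℝ (Fin n → ℝ)
        (fderiv ℝ X x : (Fin n → ℝ) →ₗ[ℝ] (Fin n → ℝ)) = vdiv X x := rfl
    rw [this, hdivX, mul_zero]
  have t5 : trC n ((fderiv ℝ h x).smulRight (X x)) = fderiv ℝ h x (X x) := by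
    rw [trC_apply]
    have hcoe : (((fderiv ℝ h x).smulRight (X x) : (Fin n → ℝ) →L[ℝ] (Fin n → ℝ)) :
        (Fin n → ℝ) →ₗ[ℝ] (Fin n → ℝ))
        = LinearMap.smulRight ((fderiv ℝ h x) : (Fin n → ℝ) →ₗ[ℝ] ℝ) (X x) := rfl
    rw [hcoe, trace_smulRight']
    rfl
  rw [t1, t2, t3, t4, t5] at keyT
  -- conclude
  rw [fderiv_fun_add (by
      have : DifferentiableAt ℝ (vdiv Y) x := by
        rw [hvd]; exact ((trC n).differentiableAt).comp x (hDY x)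
      exact this) (hhd x)]
  simp only [ContinuousLinearMap.add_apply]
  linarith [keyT]
end

section
/- Let L : ℝⁿ × ℝⁿ → ℝ, (x,v) ↦ L(x,v), be a smooth regular Lagrangian, i.e. the Hessian matrix W(x,v) with entries W_{ij} = ∂²L/∂vⁱ∂vʲ is invertible at every point, and let Γ be the associated Lagrangian dynamical vector field, Γ(x,v) = (v, F(x,v)), where F : ℝⁿ×ℝⁿ → ℝⁿ is smooth and satisfies the Euler–Lagrange relations ∑ⱼ W_{ij}(x,v)·Fʲ(x,v) + ∑ⱼ (∂²L/∂vⁱ∂xʲ)(x,v)·vʲ = (∂L/∂xⁱ)(x,v) for all i. Then det W is a Jacobi multiplier for Γ, i.e. Γ(det W) + (det W)·div Γ = 0 identically on ℝⁿ×ℝⁿ (here div Γ = ∑ᵢ ∂Fⁱ/∂vⁱ). -/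
/-- The divergence of a vector field on ℝⁿ×ℝⁿ: the trace of its Fréchet derivative. -/
noncomputable def pdiv {n : ℕ}
    (Z : (Fin n → ℝ) × (Fin n → ℝ) → (Fin n → ℝ) × (Fin n → ℝ))
    (p : (Fin n → ℝ) × (Fin n → ℝ)) : ℝ :=
  LinearMap.trace ℝ ((Fin n → ℝ) × (Fin n → ℝ))
    (fderiv ℝ Z p : ((Fin n → ℝ) × (Fin n → ℝ)) →ₗ[ℝ] ((Fin n → ℝ) × (Fin n → ℝ)))

/-- The Hessian matrix of a Lagrangian with respect to the velocities:
`W i j = ∂²L/∂vⁱ∂vʲ`. -/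
noncomputable def hessV {n : ℕ} (L : (Fin n → ℝ) × (Fin n → ℝ) → ℝ)
    (p : (Fin n → ℝ) × (Fin n → ℝ)) : Matrix (Fin n) (Fin n) ℝ :=
  Matrix.of fun i j =>
    fderiv ℝ (fun q => fderiv ℝ L q (0, Pi.single j 1)) p (0, Pi.single i 1)

set_option maxHeartbeats 2000000
set_option linter.unusedVariables false

open Matrix

/-! ### Auxiliary definitions -/

/-- basis vector in the position slot -/
def vX (n : ℕ) (i : Fin n) : (Fin n → ℝ) × (Fin n → ℝ) := (Pi.single i 1, 0)
/-- basis vector in the velocity slot -/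
def vV (n : ℕ) (i : Fin n) : (Fin n → ℝ) × (Fin n → ℝ) := (0, Pi.single i 1)

noncomputable def detCM (n : ℕ) : ContinuousMultilinearMap ℝ (fun _ : Fin n => (Fin n → ℝ)) ℝ :=
  MultilinearMap.mkContinuous (Matrix.detRowAlternating).toMultilinearMap
    (Fintype.card (Equiv.Perm (Fin n))) (by
      intro m
      have h1 : (Matrix.detRowAlternating (R := ℝ) (n := Fin n)).toMultilinearMap m
          = (Matrix.of m).det := rfl
      rw [h1, Matrix.det_apply']
      calc |∑ σ : Equiv.Perm (Fin n), ((Equiv.Perm.sign σ : ℤ) : ℝ) * ∏ i, Matrix.of m (σ i) i|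
          ≤ ∑ σ : Equiv.Perm (Fin n), |((Equiv.Perm.sign σ : ℤ) : ℝ) * ∏ i, Matrix.of m (σ i) i| :=
            Finset.abs_sum_le_sum_abs _ _
        _ ≤ ∑ _σ : Equiv.Perm (Fin n), ∏ i, ‖m i‖ := by
            apply Finset.sum_le_sum
            intro σ _
            rw [abs_mul]
            have hs : |((Equiv.Perm.sign σ : ℤ) : ℝ)| = 1 := by
              rcases Int.units_eq_one_or (Equiv.Perm.sign σ) with h | h <;> simp [h]
            rw [hs, one_mul]
            calc |∏ i, Matrix.of m (σ i) i| = ∏ i, |m (σ i) i| := by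
                  rw [Finset.abs_prod]; rfl
              _ ≤ ∏ i, ‖m (σ i)‖ := by
                  apply Finset.prod_le_prod (fun i _ => abs_nonneg _)
                  intro i _
                  exact norm_le_pi_norm (m (σ i)) i
              _ = ∏ i, ‖m i‖ := Equiv.prod_comp σ (fun j => ‖m j‖)
        _ = (Fintype.card (Equiv.Perm (Fin n))) * ∏ i, ‖m i‖ := by
            rw [Finset.sum_const, Finset.card_univ, nsmul_eq_mul])

lemma detCM_apply {n : ℕ} (m : Fin n → (Fin n → ℝ)) : detCM n m = (Matrix.of m).det := rfl

/-- Jacobi-type formula: directional derivative of `det ∘ M`. -/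
lemma fderiv_det_comp {E : Type*} [NormedAddCommGroup E] [NormedSpace ℝ E]
    {n : ℕ} (M : E → Matrix (Fin n) (Fin n) ℝ) (p : E)
    (hM : ∀ i, DifferentiableAt ℝ (fun q => M q i) p) (u : E) :
    fderiv ℝ (fun q => (M q).det) p u
      = ∑ i, ∑ j, (Matrix.adjugate (M p)) j i * fderiv ℝ (fun q => M q i) p u j := by
  have hd : HasFDerivAt (fun q => (M q).det)
      (∑ i : Fin n, ((detCM n).toContinuousLinearMap (fun j => M p j) i).comp
        (fderiv ℝ (fun q => M q i) p)) p :=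
    HasFDerivAt.multilinear_comp (detCM n) (fun i => (hM i).hasFDerivAt)
  rw [hd.fderiv]
  rw [ContinuousLinearMap.sum_apply]
  apply Finset.sum_congr rfl
  intro i _
  rw [ContinuousLinearMap.comp_apply]
  have h1 : ∀ (v : Fin n → ℝ), (detCM n).toContinuousLinearMap (fun j => M p j) i v
      = ((M p).updateRow i v).det := by
    intro v
    show detCM n (Function.update (fun j => M p j) i v) = _
    rw [detCM_apply]
    congr 1
  rw [h1]
  rw [← Matrix.cramer_transpose_apply, Matrix.cramer_eq_adjugate_mulVec, Matrix.mulVec,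
    ← Matrix.adjugate_transpose]
  simp [dotProduct, Matrix.transpose_apply]

lemma hasFDerivAt_clm_eval {E F : Type*} [NormedAddCommGroup E] [NormedSpace ℝ E]
    [NormedAddCommGroup F] [NormedSpace ℝ F]
    {g : E → (E →L[ℝ] F)} {g' : E →L[ℝ] E →L[ℝ] F} {p : E}
    (hg : HasFDerivAt g g' p) (b : E) :
    HasFDerivAt (fun q => g q b) ((ContinuousLinearMap.apply ℝ F b).comp g') p :=
  ((ContinuousLinearMap.apply ℝ F b).hasFDerivAt).comp p hg

section
variable {E : Type*} [NormedAddCommGroup E] [NormedSpace ℝ E]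

lemma fderiv_fderiv_eval {L : E → ℝ} (hL : ContDiff ℝ (⊤ : ℕ∞) L) (q : E) (b d : E) :
    fderiv ℝ (fun q' => fderiv ℝ L q' b) q d = fderiv ℝ (fderiv ℝ L) q d b := by
  have h1 : DifferentiableAt ℝ (fderiv ℝ L) q :=
    ((hL.fderiv_right (m := (⊤ : ℕ∞)) (by simp)).differentiable (by simp)).differentiableAt
  rw [(hasFDerivAt_clm_eval h1.hasFDerivAt b).fderiv]
  rfl

lemma fderiv_A2_eval {L : E → ℝ} (hL : ContDiff ℝ (⊤ : ℕ∞) L) (p : E) (b c d : E) :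
    fderiv ℝ (fun q => fderiv ℝ (fderiv ℝ L) q b c) p d
      = fderiv ℝ (fderiv ℝ (fderiv ℝ L)) p d b c := by
  have h2 : DifferentiableAt ℝ (fderiv ℝ (fderiv ℝ L)) p :=
    (((hL.fderiv_right (m := (⊤ : ℕ∞)) (by simp)).fderiv_right (m := (⊤ : ℕ∞)) (by simp)).differentiable (by simp)).differentiableAt
  have hb : HasFDerivAt (fun q => fderiv ℝ (fderiv ℝ L) q b)
      ((ContinuousLinearMap.apply ℝ (E →L[ℝ] ℝ) b).comp (fderiv ℝ (fderiv ℝ (fderiv ℝ L)) p)) p :=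
    hasFDerivAt_clm_eval h2.hasFDerivAt b
  rw [(hasFDerivAt_clm_eval hb c).fderiv]
  rfl

lemma hasFDerivAt_A2_eval {L : E → ℝ} (hL : ContDiff ℝ (⊤ : ℕ∞) L) (p : E) (b c : E) :
    HasFDerivAt (fun q => fderiv ℝ (fderiv ℝ L) q b c)
      ((ContinuousLinearMap.apply ℝ ℝ c).comp
        (((ContinuousLinearMap.apply ℝ (E →L[ℝ] ℝ) b).comp
          (fderiv ℝ (fderiv ℝ (fderiv ℝ L)) p)))) p := by
  have h2 : DifferentiableAt ℝ (fderiv ℝ (fderiv ℝ L)) p :=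
    (((hL.fderiv_right (m := (⊤ : ℕ∞)) (by simp)).fderiv_right (m := (⊤ : ℕ∞)) (by simp)).differentiable (by simp)).differentiableAt
  exact hasFDerivAt_clm_eval (hasFDerivAt_clm_eval h2.hasFDerivAt b) c

lemma A2_symm {L : E → ℝ} (hL : ContDiff ℝ (⊤ : ℕ∞) L) (q : E) (a b : E) :
    fderiv ℝ (fderiv ℝ L) q a b = fderiv ℝ (fderiv ℝ L) q b a :=
  (hL.contDiffAt.isSymmSndFDerivAt (by rw [minSmoothness_of_isRCLikeNormedField]; exact WithTop.coe_le_coe.mpr le_top)) a b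

lemma A3_symm12 {L : E → ℝ} (hL : ContDiff ℝ (⊤ : ℕ∞) L) (p : E) (a b c : E) :
    fderiv ℝ (fderiv ℝ (fderiv ℝ L)) p a b c = fderiv ℝ (fderiv ℝ (fderiv ℝ L)) p b a c := by
  have h := (((hL.fderiv_right (m := (⊤ : ℕ∞)) (by simp)).contDiffAt (x := p)).isSymmSndFDerivAt (by rw [minSmoothness_of_isRCLikeNormedField]; exact WithTop.coe_le_coe.mpr le_top)) a b
  exact DFunLike.congr_fun h c

lemma A3_symm23 {L : E → ℝ} (hL : ContDiff ℝ (⊤ : ℕ∞) L) (p : E) (a b c : E) :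
    fderiv ℝ (fderiv ℝ (fderiv ℝ L)) p a b c = fderiv ℝ (fderiv ℝ (fderiv ℝ L)) p a c b := by
  have hfun : (fun q => fderiv ℝ (fderiv ℝ L) q b c) = (fun q => fderiv ℝ (fderiv ℝ L) q c b) :=
    funext (fun q => A2_symm hL q b c)
  rw [← fderiv_A2_eval hL p b c a, ← fderiv_A2_eval hL p c b a, hfun]

lemma A3_symm13 {L : E → ℝ} (hL : ContDiff ℝ (⊤ : ℕ∞) L) (p : E) (a b c : E) :
    fderiv ℝ (fderiv ℝ (fderiv ℝ L)) p a b c = fderiv ℝ (fderiv ℝ (fderiv ℝ L)) p c b a := by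
  rw [A3_symm23 hL, A3_symm12 hL, A3_symm23 hL]

lemma A3_cycle {L : E → ℝ} (hL : ContDiff ℝ (⊤ : ℕ∞) L) (p : E) (a b c : E) :
    fderiv ℝ (fderiv ℝ (fderiv ℝ L)) p a b c = fderiv ℝ (fderiv ℝ (fderiv ℝ L)) p b c a := by
  rw [A3_symm12 hL, A3_symm23 hL]

end

lemma pdiv_eq {n : ℕ} (F : (Fin n → ℝ) × (Fin n → ℝ) → (Fin n → ℝ))
    {p : (Fin n → ℝ) × (Fin n → ℝ)} (hF : DifferentiableAt ℝ F p) :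
    pdiv (fun q => (q.2, F q)) p = ∑ k, fderiv ℝ F p (vV n k) k := by
  have hZ : HasFDerivAt (fun q : (Fin n → ℝ) × (Fin n → ℝ) => (q.2, F q))
      ((ContinuousLinearMap.snd ℝ (Fin n → ℝ) (Fin n → ℝ)).prod (fderiv ℝ F p)) p :=
    hasFDerivAt_snd.prodMk hF.hasFDerivAt
  rw [pdiv, hZ.fderiv]
  set b := (Pi.basisFun ℝ (Fin n)).prod (Pi.basisFun ℝ (Fin n)) with hb
  rw [LinearMap.trace_eq_matrix_trace ℝ b, Matrix.trace]
  rw [Fintype.sum_sum_type]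
  have h1 : ∀ i : Fin n,
      ((LinearMap.toMatrix b b) ↑((ContinuousLinearMap.snd ℝ (Fin n → ℝ) (Fin n → ℝ)).prod
        (fderiv ℝ F p))).diag (Sum.inl i) = (0:ℝ) := by
    intro i
    simp [hb, Matrix.diag_apply, LinearMap.toMatrix_apply, Module.Basis.prod_apply, Pi.basisFun_repr,
      Module.Basis.prod_repr_inl]
  have h2 : ∀ k : Fin n,
      ((LinearMap.toMatrix b b) ↑((ContinuousLinearMap.snd ℝ (Fin n → ℝ) (Fin n → ℝ)).prod
        (fderiv ℝ F p))).diag (Sum.inr k) = fderiv ℝ F p (0, Pi.single k 1) k := by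
    intro k
    simp [hb, Matrix.diag_apply, LinearMap.toMatrix_apply, Module.Basis.prod_apply, Pi.basisFun_repr,
      Module.Basis.prod_repr_inr, Pi.basisFun_apply]
  rw [Finset.sum_congr rfl (fun i _ => h1 i), Finset.sum_congr rfl (fun k _ => h2 k)]
  simp [vV]

section main
variable {n : ℕ} (L : (Fin n → ℝ) × (Fin n → ℝ) → ℝ)

lemma hessV_eq (hL : ContDiff ℝ (⊤ : ℕ∞) L) (q : (Fin n → ℝ) × (Fin n → ℝ)) (i j : Fin n) :
    hessV L q i j = fderiv ℝ (fderiv ℝ L) q (vV n i) (vV n j) := by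
  show fderiv ℝ (fun q' => fderiv ℝ L q' (0, Pi.single j 1)) q (0, Pi.single i 1) = _
  rw [fderiv_fderiv_eval hL]
  rfl

lemma hessV_entry_fderiv (hL : ContDiff ℝ (⊤ : ℕ∞) L) (p : (Fin n → ℝ) × (Fin n → ℝ)) (i j : Fin n)
    (d : (Fin n → ℝ) × (Fin n → ℝ)) :
    fderiv ℝ (fun q => hessV L q i j) p d
      = fderiv ℝ (fderiv ℝ (fderiv ℝ L)) p d (vV n i) (vV n j) := by
  have hfun : (fun q => hessV L q i j)
      = (fun q => fderiv ℝ (fderiv ℝ L) q (vV n i) (vV n j)) :=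
    funext (fun q => hessV_eq L hL q i j)
  rw [hfun, fderiv_A2_eval hL]

lemma hessV_entry_diff (hL : ContDiff ℝ (⊤ : ℕ∞) L) (p : (Fin n → ℝ) × (Fin n → ℝ)) (i j : Fin n) :
    DifferentiableAt ℝ (fun q => hessV L q i j) p := by
  have hfun : (fun q => hessV L q i j)
      = (fun q => fderiv ℝ (fderiv ℝ L) q (vV n i) (vV n j)) :=
    funext (fun q => hessV_eq L hL q i j)
  rw [hfun]
  exact (hasFDerivAt_A2_eval hL p (vV n i) (vV n j)).differentiableAt

end main

/-- For a smooth regular Lagrangian `L(x,v)` on ℝⁿ×ℝⁿ (Hessian `W` in the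
velocities invertible everywhere) with associated Lagrangian dynamical vector field
`Γ(x,v) = (v, F(x,v))`, where `F` is smooth and satisfies the Euler–Lagrange relations
`∑ⱼ W_{ij}·Fʲ + ∑ⱼ (∂²L/∂vⁱ∂xʲ)·vʲ = ∂L/∂xⁱ`, the determinant `det W` is a Jacobi
multiplier for `Γ`: `Γ(det W) + (det W)·div Γ = 0` identically. -/
theorem stmt_8 {n : ℕ} (L : (Fin n → ℝ) × (Fin n → ℝ) → ℝ)
    (F : (Fin n → ℝ) × (Fin n → ℝ) → (Fin n → ℝ))
    (hL : ContDiff ℝ (⊤ : ℕ∞) L) (hF : ContDiff ℝ (⊤ : ℕ∞) F)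
    (hreg : ∀ p, IsUnit (hessV L p))
    (hEL : ∀ p, ∀ i,
      (∑ j, hessV L p i j * F p j) +
      (∑ j, fderiv ℝ (fun q => fderiv ℝ L q (0, Pi.single i 1)) p (Pi.single j 1, 0) * p.2 j)
        = fderiv ℝ L p (Pi.single i 1, 0)) :
    ∀ p : (Fin n → ℝ) × (Fin n → ℝ),
      fderiv ℝ (fun q => (hessV L q).det) p (p.2, F p) +
        (hessV L p).det * pdiv (fun q => (q.2, F q)) p = 0 := by
  intro p
  have hFdiff : DifferentiableAt ℝ F p := (hF.differentiable (by simp)).differentiableAt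
  have hLdiff : DifferentiableAt ℝ (fderiv ℝ L) p :=
    ((hL.fderiv_right (m := (⊤ : ℕ∞)) (by simp)).differentiable (by simp)).differentiableAt
  -- Step (a): Jacobi formula for the directional derivative of det ∘ hessV
  have h_a : fderiv ℝ (fun q => (hessV L q).det) p (p.2, F p)
      = ∑ i, ∑ j, (hessV L p).adjugate j i *
          fderiv ℝ (fderiv ℝ (fderiv ℝ L)) p (p.2, F p) (vV n i) (vV n j) := by
    rw [fderiv_det_comp (hessV L) p
      (fun i => differentiableAt_pi.mpr (fun j => hessV_entry_diff L hL p i j)) (p.2, F p)]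
    apply Finset.sum_congr rfl; intro i _
    apply Finset.sum_congr rfl; intro j _
    congr 1
    have hrow : fderiv ℝ (fun q => hessV L q i) p
        = ContinuousLinearMap.pi (fun j => fderiv ℝ (fun q => hessV L q i j) p) :=
      fderiv_pi (fun j => hessV_entry_diff L hL p i j)
    rw [hrow, ContinuousLinearMap.pi_apply, hessV_entry_fderiv L hL]
  -- EL-derived key identity
  have K : ∀ i k : Fin n,
      (∑ j, hessV L p i j * fderiv ℝ F p (vV n k) j)
        + fderiv ℝ (fderiv ℝ (fderiv ℝ L)) p (p.2, F p) (vV n i) (vV n k)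
      = fderiv ℝ (fderiv ℝ L) p (vV n k) (vX n i)
        - fderiv ℝ (fderiv ℝ L) p (vX n k) (vV n i) := by
    intro i k
    -- derivative of the j-th coordinate of F
    have hFj : ∀ j : Fin n, HasFDerivAt (fun q => F q j)
        ((ContinuousLinearMap.proj (R := ℝ) (φ := fun _ : Fin n => ℝ) j).comp (fderiv ℝ F p)) p :=
      fun j => (ContinuousLinearMap.proj (R := ℝ) (φ := fun _ : Fin n => ℝ) j).hasFDerivAt.comp p hFdiff.hasFDerivAt
    have hq2 : ∀ j : Fin n, HasFDerivAt (fun q : (Fin n → ℝ) × (Fin n → ℝ) => q.2 j)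
        ((ContinuousLinearMap.proj j).comp
          (ContinuousLinearMap.snd ℝ (Fin n → ℝ) (Fin n → ℝ))) p :=
      fun j => ((ContinuousLinearMap.proj j).comp
        (ContinuousLinearMap.snd ℝ (Fin n → ℝ) (Fin n → ℝ))).hasFDerivAt
    have hL1e : HasFDerivAt (fun q => fderiv ℝ L q (vX n i))
        ((ContinuousLinearMap.apply ℝ ℝ (vX n i)).comp (fderiv ℝ (fderiv ℝ L) p)) p :=
      hasFDerivAt_clm_eval hLdiff.hasFDerivAt (vX n i)
    -- the Euler–Lagrange function is identically zero
    have hBig := (((HasFDerivAt.sum (u := (Finset.univ : Finset (Fin n))) (fun (j : Fin n) _ =>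
        ((hasFDerivAt_A2_eval hL p (vV n i) (vV n j)).mul (hFj j)))).add
        (HasFDerivAt.sum (u := (Finset.univ : Finset (Fin n))) (fun (j : Fin n) _ =>
          ((hasFDerivAt_A2_eval hL p (vX n j) (vV n i)).mul (hq2 j))))).sub hL1e)
    have hΦ0 : (fun q => ((∑ j, fderiv ℝ (fderiv ℝ L) q (vV n i) (vV n j) * F q j)
          + ∑ j, fderiv ℝ (fderiv ℝ L) q (vX n j) (vV n i) * q.2 j)
          - fderiv ℝ L q (vX n i)) = fun _ => (0:ℝ) := by
      funext q
      rw [sub_eq_zero]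
      have e1 : ∀ j : Fin n, fderiv ℝ (fderiv ℝ L) q (vV n i) (vV n j) = hessV L q i j :=
        fun j => (hessV_eq L hL q i j).symm
      have e2 : ∀ j : Fin n, fderiv ℝ (fderiv ℝ L) q (vX n j) (vV n i)
          = fderiv ℝ (fun q' => fderiv ℝ L q' (0, Pi.single i 1)) q (Pi.single j 1, 0) :=
        fun j => (fderiv_fderiv_eval hL q (0, Pi.single i 1) (Pi.single j 1, 0)).symm
      simp only [e1, e2]
      exact hEL q i
    have hD0 := hBig.fderiv
    rw [show (((∑ j : Fin n, (fun q => fderiv ℝ (fderiv ℝ L) q (vV n i) (vV n j)) * fun q => F q j)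
        + ∑ j : Fin n, (fun q => fderiv ℝ (fderiv ℝ L) q (vX n j) (vV n i)) * fun q => q.2 j)
        - fun q => fderiv ℝ L q (vX n i)) = fun _ => (0:ℝ) by
      rw [← hΦ0]; funext q; simp only [Pi.sub_apply, Pi.add_apply, Finset.sum_apply, Pi.mul_apply]] at hD0
    rw [fderiv_const_apply] at hD0
    have hval := DFunLike.congr_fun hD0.symm (vV n k)
    simp only [ContinuousLinearMap.sub_apply, ContinuousLinearMap.add_apply,
      ContinuousLinearMap.coe_sum', Finset.sum_apply, ContinuousLinearMap.smul_apply,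
      ContinuousLinearMap.comp_apply, ContinuousLinearMap.apply_apply,
      ContinuousLinearMap.proj_apply, ContinuousLinearMap.coe_snd', smul_eq_mul,
      ContinuousLinearMap.zero_apply] at hval
    -- hval is the differentiated EL identity in direction (0, eₖ)
    rw [Finset.sum_add_distrib, Finset.sum_add_distrib] at hval
    -- the Kronecker-delta sum collapses
    have hs1 : ∑ j, fderiv ℝ (fderiv ℝ L) p (vX n j) (vV n i)
          * (vV n k).2 j
        = fderiv ℝ (fderiv ℝ L) p (vX n k) (vV n i) := by
      simp [vV, Pi.single_apply, mul_ite, mul_one, mul_zero, Finset.sum_ite_eq]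
    -- expansion of the full directional derivative of the Hessian entry
    have hvec : ∀ (x : Fin n → ℝ), ∑ j, x j • (Pi.single j 1 : Fin n → ℝ) = x := by
      intro x
      funext l
      rw [Finset.sum_apply]
      simp [Pi.single_apply, Finset.sum_ite_eq]
    have hu_sum : (p.2, F p) = (∑ j, p.2 j • vX n j) + ∑ j, F p j • vV n j := by
      have h1 : (∑ j, p.2 j • vX n j) = ((∑ j, p.2 j • (Pi.single j 1 : Fin n → ℝ)),
          (0 : Fin n → ℝ)) := by
        rw [Prod.ext_iff]
        constructor
        · rw [Prod.fst_sum]; simp [vX]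
        · rw [Prod.snd_sum]; simp [vX]
      have h2 : (∑ j, F p j • vV n j) = ((0 : Fin n → ℝ),
          (∑ j, F p j • (Pi.single j 1 : Fin n → ℝ))) := by
        rw [Prod.ext_iff]
        constructor
        · rw [Prod.fst_sum]; simp [vV]
        · rw [Prod.snd_sum]; simp [vV]
      rw [h1, h2, Prod.mk_add_mk, zero_add, add_zero, hvec, hvec]
    have hWd : fderiv ℝ (fderiv ℝ (fderiv ℝ L)) p (p.2, F p) (vV n i) (vV n k)
        = (∑ j, p.2 j * fderiv ℝ (fderiv ℝ (fderiv ℝ L)) p (vX n j) (vV n i) (vV n k))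
          + ∑ j, F p j * fderiv ℝ (fderiv ℝ (fderiv ℝ L)) p (vV n j) (vV n i) (vV n k) := by
      conv_lhs => rw [hu_sum]
      rw [map_add, map_sum, map_sum]
      simp [ContinuousLinearMap.coe_sum', Finset.sum_apply, ContinuousLinearMap.add_apply,
        ContinuousLinearMap.smul_apply, smul_eq_mul]
    -- symmetry rearrangements
    have e3 : ∑ j, F p j * fderiv ℝ (fderiv ℝ (fderiv ℝ L)) p (vV n j) (vV n i) (vV n k)
        = ∑ j, F p j * fderiv ℝ (fderiv ℝ (fderiv ℝ L)) p (vV n k) (vV n i) (vV n j) :=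
      Finset.sum_congr rfl fun j _ => by rw [A3_symm13 hL]
    have e4 : ∑ j, p.2 j * fderiv ℝ (fderiv ℝ (fderiv ℝ L)) p (vX n j) (vV n i) (vV n k)
        = ∑ j, p.2 j * fderiv ℝ (fderiv ℝ (fderiv ℝ L)) p (vV n k) (vX n j) (vV n i) :=
      Finset.sum_congr rfl fun j _ => by rw [← A3_cycle hL]
    have e5 : ∑ j, hessV L p i j * fderiv ℝ F p (vV n k) j
        = ∑ j, fderiv ℝ (fderiv ℝ L) p (vV n i) (vV n j) * fderiv ℝ F p (vV n k) j :=
      Finset.sum_congr rfl fun j _ => by rw [hessV_eq L hL]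
    rw [e5, hWd, e3, e4]
    linarith [hval, hs1]
  -- symmetry of hessV and its adjugate
  have hWs : (hessV L p)ᵀ = hessV L p := by
    ext i j
    rw [Matrix.transpose_apply, hessV_eq L hL, hessV_eq L hL, A2_symm hL]
  have hadj : ∀ i k, (hessV L p).adjugate i k = (hessV L p).adjugate k i := by
    intro i k
    conv_rhs => rw [← hWs, ← Matrix.adjugate_transpose, Matrix.transpose_apply]
  -- assembly
  rw [h_a, pdiv_eq F hFdiff]
  have big : ∑ i, ∑ k, (hessV L p).adjugate k i *
        ((∑ j, hessV L p i j * fderiv ℝ F p (vV n k) j)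
          + fderiv ℝ (fderiv ℝ (fderiv ℝ L)) p (p.2, F p) (vV n i) (vV n k))
      = ∑ i, ∑ k, (hessV L p).adjugate k i *
        (fderiv ℝ (fderiv ℝ L) p (vV n k) (vX n i)
          - fderiv ℝ (fderiv ℝ L) p (vX n k) (vV n i)) :=
    Finset.sum_congr rfl fun i _ => Finset.sum_congr rfl fun k _ => by rw [K i k]
  have rhs0 : ∑ i, ∑ k, (hessV L p).adjugate k i *
      (fderiv ℝ (fderiv ℝ L) p (vV n k) (vX n i)
        - fderiv ℝ (fderiv ℝ L) p (vX n k) (vV n i)) = 0 := by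
    have hC : ∀ i k : Fin n, fderiv ℝ (fderiv ℝ L) p (vV n k) (vX n i)
        = fderiv ℝ (fderiv ℝ L) p (vX n i) (vV n k) := fun i k => A2_symm hL p _ _
    simp only [mul_sub]
    simp only [Finset.sum_sub_distrib]
    rw [sub_eq_zero]
    rw [Finset.sum_comm]
    apply Finset.sum_congr rfl; intro i _
    apply Finset.sum_congr rfl; intro k _
    rw [hadj i k, hC k i]
  have lhs_split : ∑ i, ∑ k, (hessV L p).adjugate k i *
        ((∑ j, hessV L p i j * fderiv ℝ F p (vV n k) j)
          + fderiv ℝ (fderiv ℝ (fderiv ℝ L)) p (p.2, F p) (vV n i) (vV n k))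
      = (hessV L p).det * (∑ k, fderiv ℝ F p (vV n k) k)
        + ∑ i, ∑ j, (hessV L p).adjugate j i *
            fderiv ℝ (fderiv ℝ (fderiv ℝ L)) p (p.2, F p) (vV n i) (vV n j) := by
    simp only [mul_add]
    simp only [Finset.sum_add_distrib]
    congr 1
    have h1 : ∑ i, ∑ k, (hessV L p).adjugate k i *
          ∑ j, hessV L p i j * fderiv ℝ F p (vV n k) j
        = ∑ k, ∑ j, (∑ i, (hessV L p).adjugate k i * hessV L p i j)
            * fderiv ℝ F p (vV n k) j := by
      simp only [Finset.mul_sum, Finset.sum_mul, mul_assoc]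
      rw [Finset.sum_comm]
      apply Finset.sum_congr rfl; intro k _
      rw [Finset.sum_comm]
    have h2 : ∀ k j : Fin n, (∑ i, (hessV L p).adjugate k i * hessV L p i j)
        = ((hessV L p).det • (1 : Matrix (Fin n) (Fin n) ℝ)) k j := by
      intro k j; rw [← Matrix.mul_apply, Matrix.adjugate_mul]
    rw [h1]
    simp only [h2, Matrix.smul_apply, Matrix.one_apply, smul_eq_mul, mul_ite, ite_mul,
      mul_one, mul_zero, zero_mul, Finset.sum_ite_eq, Finset.mem_univ, if_true, Finset.mul_sum]
  rw [lhs_split, rhs0] at big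
  linarith [big]
end

section
/- Let F : ℝ^{1+2n} → ℝⁿ be smooth and let Γ be the NSODE vector field Γ(t,x,v) = (1, v, F(t,x,v)) on ℝ^{1+2n}. Let Y be a smooth vector field on ℝ^{1+2n} with components (Y⁰, Y¹,…,Yⁿ, Ȳ¹,…,Ȳⁿ) and let h : ℝ^{1+2n} → ℝ be smooth. Then [Y,Γ] = h·Γ if and only if h = −Γ(Y⁰), Ȳⁱ = Γ(Yⁱ) − Γ(Y⁰)·vⁱ for all i = 1,…,n, and Y(Fⁱ) = Γ(Γ(Yⁱ)) − 2Γ(Y⁰)·Fⁱ − Γ(Γ(Y⁰))·vⁱ for all i = 1,…,n. -/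
/-- The evolution space ℝ^{1+2n} with coordinates (t, x, v). -/
abbrev Evo (n : ℕ) := ℝ × (Fin n → ℝ) × (Fin n → ℝ)

/-- The Lie bracket of vector fields: [Z,Y](p) = DY(p)(Z(p)) − DZ(p)(Y(p)). -/
noncomputable def elieBracket {n : ℕ} (Z Y : Evo n → Evo n) (p : Evo n) : Evo n :=
  fderiv ℝ Y p (Z p) - fderiv ℝ Z p (Y p)

/-- The NSODE vector field associated with `F`: Γ(t,x,v) = (1, v, F(t,x,v)). -/
def nsode {n : ℕ} (F : Evo n → (Fin n → ℝ)) (p : Evo n) : Evo n :=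
  (1, p.2.2, F p)

section Aux

variable {n : ℕ}

/-- fderiv of a CLM composed with a function, applied. -/
lemma fderiv_clm_comp_apply {E G : Type*} [NormedAddCommGroup E] [NormedSpace ℝ E]
    [NormedAddCommGroup G] [NormedSpace ℝ G]
    (L : E →L[ℝ] G) (f : Evo n → E) {p : Evo n} (hf : DifferentiableAt ℝ f p) (u : Evo n) :
    fderiv ℝ (fun q => L (f q)) p u = L (fderiv ℝ f p u) := by
  have := (L.hasFDerivAt.comp p hf.hasFDerivAt).fderiv
  rw [show (fun q => L (f q)) = L ∘ f from rfl, this]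
  rfl

lemma contDiff_nsode {F : Evo n → (Fin n → ℝ)} (hF : ContDiff ℝ (⊤ : ℕ∞) F) :
    ContDiff ℝ (⊤ : ℕ∞) (nsode F) :=
  contDiff_const.prodMk ((contDiff_snd.comp contDiff_snd).prodMk hF)

/-- projection CLM to the v-coordinates -/
noncomputable def vproj (n : ℕ) : Evo n →L[ℝ] (Fin n → ℝ) :=
  (ContinuousLinearMap.snd ℝ (Fin n → ℝ) (Fin n → ℝ)).comp
    (ContinuousLinearMap.snd ℝ ℝ ((Fin n → ℝ) × (Fin n → ℝ)))

lemma fderiv_nsode {F : Evo n → (Fin n → ℝ)} (hF : ContDiff ℝ (⊤ : ℕ∞) F) (p u : Evo n) :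
    fderiv ℝ (nsode F) p u = (0, u.2.2, fderiv ℝ F p u) := by
  have h1 : HasFDerivAt (nsode F)
      (ContinuousLinearMap.prod 0 ((vproj n).prod (fderiv ℝ F p))) p :=
    (hasFDerivAt_const (1 : ℝ) p).prodMk
      (((vproj n).hasFDerivAt).prodMk (hF.differentiable (by simp) p).hasFDerivAt)
  rw [h1.fderiv]
  rfl

end Aux

/-- For the NSODE vector field `Γ(t,x,v) = (1, v, F(t,x,v))`, a smooth vector
field `Y = (Y⁰, Yⁱ, Ȳⁱ)` on ℝ^{1+2n} and a smooth function `h`, one has `[Y,Γ] = h·Γ` if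
and only if `h = −Γ(Y⁰)`, `Ȳⁱ = Γ(Yⁱ) − Γ(Y⁰)·vⁱ` for all `i`, and
`Y(Fⁱ) = Γ(Γ(Yⁱ)) − 2Γ(Y⁰)·Fⁱ − Γ(Γ(Y⁰))·vⁱ` for all `i`. -/
theorem stmt_11 {n : ℕ} (F : Evo n → (Fin n → ℝ)) (Y : Evo n → Evo n) (h : Evo n → ℝ)
    (hF : ContDiff ℝ (⊤ : ℕ∞) F) (hY : ContDiff ℝ (⊤ : ℕ∞) Y) (hh : ContDiff ℝ (⊤ : ℕ∞) h) :
    (∀ p, elieBracket Y (nsode F) p = h p • nsode F p) ↔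
      ((∀ p, h p = - fderiv ℝ (fun q => (Y q).1) p (nsode F p)) ∧
       (∀ i, ∀ p : Evo n, (Y p).2.2 i =
          fderiv ℝ (fun q => (Y q).2.1 i) p (nsode F p)
            - fderiv ℝ (fun q => (Y q).1) p (nsode F p) * p.2.2 i) ∧
       (∀ i, ∀ p : Evo n,
          fderiv ℝ (fun q => F q i) p (Y p) =
            fderiv ℝ (fun q => fderiv ℝ (fun r => (Y r).2.1 i) q (nsode F q)) p (nsode F p)
            - 2 * fderiv ℝ (fun q => (Y q).1) p (nsode F p) * F p i
            - fderiv ℝ (fun q => fderiv ℝ (fun r => (Y r).1) q (nsode F q)) p (nsode F p)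
              * p.2.2 i)) := by
  have hΓ : ContDiff ℝ (⊤ : ℕ∞) (nsode F) := contDiff_nsode hF
  -- component functions of Y and their smoothness
  set Y0 : Evo n → ℝ := fun q => (Y q).1 with hY0def
  set Y1 : Fin n → Evo n → ℝ := fun i q => (Y q).2.1 i with hY1def
  set Y2 : Fin n → Evo n → ℝ := fun i q => (Y q).2.2 i with hY2def
  have hY0 : ContDiff ℝ (⊤ : ℕ∞) Y0 := contDiff_fst.comp hY
  have hY1 : ∀ i, ContDiff ℝ (⊤ : ℕ∞) (Y1 i) := fun i =>
    ((ContinuousLinearMap.proj (R := ℝ) (φ := fun _ : Fin n => ℝ) i).contDiff).comp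
      (contDiff_fst.comp (contDiff_snd.comp hY))
  have hY2 : ∀ i, ContDiff ℝ (⊤ : ℕ∞) (Y2 i) := fun i =>
    ((ContinuousLinearMap.proj (R := ℝ) (φ := fun _ : Fin n => ℝ) i).contDiff).comp
      (contDiff_snd.comp (contDiff_snd.comp hY))
  -- Γ-derivatives of the components
  set g0 : Evo n → ℝ := fun q => fderiv ℝ (fun r => (Y r).1) q (nsode F q) with hg0def
  set g1 : Fin n → Evo n → ℝ :=
    fun i q => fderiv ℝ (fun r => (Y r).2.1 i) q (nsode F q) with hg1def
  have hg0 : ContDiff ℝ (⊤ : ℕ∞) g0 := (hY0.fderiv_right (by simp)).clm_apply hΓ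
  have hg1 : ∀ i, ContDiff ℝ (⊤ : ℕ∞) (g1 i) := fun i => ((hY1 i).fderiv_right (by simp)).clm_apply hΓ
  -- component-of-fderiv identities
  have hcomp0 : ∀ p u, fderiv ℝ Y0 p u = (fderiv ℝ Y p u).1 := fun p u => by
    have := fderiv_clm_comp_apply (ContinuousLinearMap.fst ℝ ℝ ((Fin n → ℝ) × (Fin n → ℝ)))
      Y (hY.differentiable (by simp) p) u
    exact this
  have hcomp1 : ∀ i p u, fderiv ℝ (Y1 i) p u = (fderiv ℝ Y p u).2.1 i := fun i p u => by
    have := fderiv_clm_comp_apply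
      ((ContinuousLinearMap.proj (R := ℝ) (φ := fun _ : Fin n => ℝ) i).comp
        ((ContinuousLinearMap.fst ℝ (Fin n → ℝ) (Fin n → ℝ)).comp
          (ContinuousLinearMap.snd ℝ ℝ ((Fin n → ℝ) × (Fin n → ℝ)))))
      Y (hY.differentiable (by simp) p) u
    exact this
  have hcomp2 : ∀ i p u, fderiv ℝ (Y2 i) p u = (fderiv ℝ Y p u).2.2 i := fun i p u => by
    have := fderiv_clm_comp_apply
      ((ContinuousLinearMap.proj (R := ℝ) (φ := fun _ : Fin n => ℝ) i).comp
        ((ContinuousLinearMap.snd ℝ (Fin n → ℝ) (Fin n → ℝ)).comp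
          (ContinuousLinearMap.snd ℝ ℝ ((Fin n → ℝ) × (Fin n → ℝ)))))
      Y (hY.differentiable (by simp) p) u
    exact this
  have hcompF : ∀ i p u, fderiv ℝ (fun q => F q i) p u = fderiv ℝ F p u i := fun i p u => by
    have := fderiv_clm_comp_apply
      (ContinuousLinearMap.proj (R := ℝ) (φ := fun _ : Fin n => ℝ) i)
      F (hF.differentiable (by simp) p) u
    exact this
  -- the v-coordinate function
  have hvproj : ∀ (i : Fin n) (p u : Evo n),
      fderiv ℝ (fun q : Evo n => q.2.2 i) p u = u.2.2 i := fun i p u => by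
    have hK : HasFDerivAt (fun q : Evo n => q.2.2 i)
        ((ContinuousLinearMap.proj (R := ℝ) (φ := fun _ : Fin n => ℝ) i).comp (vproj n)) p :=
      ContinuousLinearMap.hasFDerivAt
        ((ContinuousLinearMap.proj (R := ℝ) (φ := fun _ : Fin n => ℝ) i).comp (vproj n))
    rw [hK.fderiv]; rfl
  -- bracket components
  have hbr1 : ∀ p, (elieBracket Y (nsode F) p).1 = - g0 p := fun p => by
    simp only [elieBracket, Prod.fst_sub, fderiv_nsode hF]
    rw [← hcomp0 p (nsode F p)]
    simp [hg0def]
    rfl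
  have hbr2 : ∀ i p, (elieBracket Y (nsode F) p).2.1 i = (Y p).2.2 i - g1 i p := fun i p => by
    simp only [elieBracket, Prod.snd_sub, Prod.fst_sub, Pi.sub_apply, fderiv_nsode hF]
    rw [← hcomp1 i p (nsode F p)]
  have hbr3 : ∀ i p, (elieBracket Y (nsode F) p).2.2 i =
      fderiv ℝ (fun q => F q i) p (Y p) - fderiv ℝ (Y2 i) p (nsode F p) := fun i p => by
    simp only [elieBracket, Prod.snd_sub, Pi.sub_apply, fderiv_nsode hF]
    rw [hcompF i p (Y p), ← hcomp2 i p (nsode F p)]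
  -- componentwise form of the bracket equation
  have comp : (∀ p, elieBracket Y (nsode F) p = h p • nsode F p) ↔
      (∀ p, (- g0 p = h p ∧ (∀ i, (Y p).2.2 i - g1 i p = h p * p.2.2 i) ∧
        (∀ i, fderiv ℝ (fun q => F q i) p (Y p) - fderiv ℝ (Y2 i) p (nsode F p)
          = h p * F p i))) := by
    apply forall_congr'
    intro p
    have hsmul : h p • nsode F p
        = ((h p : ℝ), fun i => h p * p.2.2 i, fun i => h p * F p i) := by
      simp [nsode, Prod.smul_mk, Prod.ext_iff, funext_iff]
    constructor
    · intro he
      have e1 : (elieBracket Y (nsode F) p).1 = h p := by rw [he, hsmul]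
      have e2 : ∀ i, (elieBracket Y (nsode F) p).2.1 i = h p * p.2.2 i := fun i => by
        rw [he, hsmul]
      have e3 : ∀ i, (elieBracket Y (nsode F) p).2.2 i = h p * F p i := fun i => by
        rw [he, hsmul]
      exact ⟨by rw [← hbr1 p, e1], fun i => by rw [← hbr2 i p, e2 i],
        fun i => by rw [← hbr3 i p, e3 i]⟩
    · rintro ⟨h1, h2, h3⟩
      rw [hsmul]
      refine Prod.ext ?_ (Prod.ext ?_ ?_)
      · rw [hbr1 p]; exact h1
      · funext i; rw [hbr2 i p]; exact h2 i
      · funext i; rw [hbr3 i p]; exact h3 i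
  -- second-derivative identity: if Ȳⁱ = g1 i − g0·vⁱ then
  -- Γ(Ȳⁱ) = Γ(g1 i) − Γ(g0)·vⁱ − g0·Fⁱ
  have hsecond : ∀ i, (∀ q, (Y q).2.2 i = g1 i q - g0 q * q.2.2 i) →
      ∀ p, fderiv ℝ (Y2 i) p (nsode F p) =
        fderiv ℝ (g1 i) p (nsode F p) - (fderiv ℝ g0 p (nsode F p) * p.2.2 i
          + g0 p * F p i) := by
    intro i hq p
    have hYeq : Y2 i = fun q => g1 i q - g0 q * q.2.2 i := funext fun q => hq q
    have hvdiff : DifferentiableAt ℝ (fun q : Evo n => q.2.2 i) p :=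
      (ContinuousLinearMap.hasFDerivAt
        ((ContinuousLinearMap.proj (R := ℝ) (φ := fun _ : Fin n => ℝ) i).comp
          (vproj n))).differentiableAt
    have hg0d : DifferentiableAt ℝ g0 p := (hg0.differentiable (by simp) p)
    have hg1d : DifferentiableAt ℝ (g1 i) p := ((hg1 i).differentiable (by simp) p)
    rw [hYeq, fderiv_fun_sub (g := fun q => g0 q * q.2.2 i) hg1d (hg0d.mul hvdiff), fderiv_fun_mul hg0d hvdiff]
    simp only [ContinuousLinearMap.coe_sub', Pi.sub_apply, ContinuousLinearMap.add_apply,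
      ContinuousLinearMap.coe_smul', Pi.smul_apply, smul_eq_mul]
    rw [hvproj i p (nsode F p)]
    have hv : (nsode F p).2.2 i = F p i := rfl
    rw [hv]
    ring
  rw [comp]
  constructor
  · intro H
    have H1 : ∀ p, h p = - g0 p := fun p => ((H p).1).symm
    have H2 : ∀ i q, (Y q).2.2 i = g1 i q - g0 q * q.2.2 i := fun i q => by
      have := ((H q).2.1) i
      rw [H1 q] at this
      linarith
    refine ⟨H1, fun i p => H2 i p, fun i p => ?_⟩
    have h3 := ((H p).2.2) i
    rw [H1 p, hsecond i (H2 i) p] at h3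
    linarith
  · rintro ⟨H1, H2, H3⟩
    intro p
    refine ⟨(H1 p).symm, fun i => ?_, fun i => ?_⟩
    · rw [H1 p, H2 i p]; ring
    · rw [hsecond i (fun q => H2 i q) p, H1 p]
      have h3 := H3 i p
      linarith
end

section
/- Let F : ℝ^{1+2n} → ℝⁿ be smooth and let Γ be the NSODE vector field Γ(t,x,v) = (1, v, F(t,x,v)) on ℝ^{1+2n}. Let X⁰, X¹,…,Xⁿ : ℝ^{1+n} → ℝ be smooth functions of (t,x) only, and let X^{(1)} be the vector field on ℝ^{1+2n} with components (X⁰, X¹,…,Xⁿ, X̄¹,…,X̄ⁿ), where X̄ⁱ = Γ(Xⁱ) − vⁱ·Γ(X⁰) (note that Γ(X⁰) = ∂X⁰/∂t + ∑ⱼ vʲ ∂X⁰/∂xʲ and Γ(Xⁱ) = ∂Xⁱ/∂t + ∑ⱼ vʲ ∂Xⁱ/∂xʲ are independent of F). Then div X^{(1)} = 2∑ᵢ(∂Xⁱ/∂xⁱ − vⁱ·∂X⁰/∂xⁱ) − (n−1)·Γ(X⁰). -/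
/-- The divergence of a vector field on ℝ^{1+2n}: the trace of its Fréchet derivative. -/
noncomputable def ediv {n : ℕ} (Z : Evo n → Evo n) (p : Evo n) : ℝ :=
  LinearMap.trace ℝ (Evo n) (fderiv ℝ Z p : Evo n →ₗ[ℝ] Evo n)

/-- The first prolongation `X^{(1)}` of a vector field `(X⁰, Xⁱ)` on ℝ^{1+n} depending only
on `(t,x)`: its components are `(X⁰, Xⁱ, X̄ⁱ)` with `X̄ⁱ = Γ(Xⁱ) − vⁱ·Γ(X⁰)`. -/
noncomputable def prolong {n : ℕ} (F : Evo n → (Fin n → ℝ))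
    (X0 : ℝ × (Fin n → ℝ) → ℝ) (Xv : ℝ × (Fin n → ℝ) → (Fin n → ℝ)) (p : Evo n) : Evo n :=
  (X0 (p.1, p.2.1), Xv (p.1, p.2.1),
    fun i => fderiv ℝ (fun q : Evo n => Xv (q.1, q.2.1) i) p (nsode F p)
      - p.2.2 i * fderiv ℝ (fun q : Evo n => X0 (q.1, q.2.1)) p (nsode F p))

noncomputable def prL (n : ℕ) : Evo n →L[ℝ] ℝ × (Fin n → ℝ) :=
  (ContinuousLinearMap.fst ℝ ℝ ((Fin n → ℝ) × (Fin n → ℝ))).prod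
    ((ContinuousLinearMap.fst ℝ (Fin n → ℝ) (Fin n → ℝ)).comp
      (ContinuousLinearMap.snd ℝ ℝ ((Fin n → ℝ) × (Fin n → ℝ))))

lemma prL_apply {n : ℕ} (p : Evo n) : prL n p = (p.1, p.2.1) := rfl

noncomputable def WL (n : ℕ) : Evo n →L[ℝ] ℝ × (Fin n → ℝ) :=
  (0 : Evo n →L[ℝ] ℝ).prod
    ((ContinuousLinearMap.snd ℝ (Fin n → ℝ) (Fin n → ℝ)).comp
      (ContinuousLinearMap.snd ℝ ℝ ((Fin n → ℝ) × (Fin n → ℝ))))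

lemma WL_apply {n : ℕ} (d : Evo n) : WL n d = (0, d.2.2) := rfl

/-- fderiv of a function of (t,x) only, as a composition. -/
lemma fderiv_comp_prL {n : ℕ} {E : Type*} [NormedAddCommGroup E] [NormedSpace ℝ E]
    (g : ℝ × (Fin n → ℝ) → E) (hg : ContDiff ℝ (⊤ : ℕ∞) g) (p : Evo n) :
    fderiv ℝ (fun q : Evo n => g (q.1, q.2.1)) p
      = (fderiv ℝ g (p.1, p.2.1)).comp (prL n) := by
  have : (fun q : Evo n => g (q.1, q.2.1)) = g ∘ (prL n) := rfl
  rw [this, fderiv_comp p ((hg.differentiable (by simp)).differentiableAt)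
    (prL n).differentiableAt, (prL n).fderiv, prL_apply]

/-- key derivative: r ↦ (fderiv g (r.1,r.2.1)) (1, r.2.2). -/
lemma key_hasFDerivAt {n : ℕ} (g : ℝ × (Fin n → ℝ) → ℝ) (hg : ContDiff ℝ (⊤ : ℕ∞) g) (p : Evo n) :
    HasFDerivAt (fun r : Evo n => fderiv ℝ g (r.1, r.2.1) (1, r.2.2))
      ((fderiv ℝ g (p.1, p.2.1)).comp (WL n)
        + ((fderiv ℝ (fderiv ℝ g) (p.1, p.2.1)).comp (prL n)).flip (1, p.2.2)) p := by
  have hc : HasFDerivAt (fun r : Evo n => fderiv ℝ g (r.1, r.2.1))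
      ((fderiv ℝ (fderiv ℝ g) (p.1, p.2.1)).comp (prL n)) p := by
    exact (((hg.fderiv_right (m := 1) (by exact WithTop.coe_le_coe.mpr le_top)).differentiable (by simp)) (p.1, p.2.1)).hasFDerivAt.comp p
      (prL n).hasFDerivAt
  have hu : HasFDerivAt (fun r : Evo n => ((1 : ℝ), r.2.2)) (WL n) p := by
    exact HasFDerivAt.prodMk (hasFDerivAt_const (1:ℝ) p)
      (((ContinuousLinearMap.snd ℝ (Fin n → ℝ) (Fin n → ℝ)).comp
        (ContinuousLinearMap.snd ℝ ℝ ((Fin n → ℝ) × (Fin n → ℝ)))).hasFDerivAt)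
  exact hc.clm_apply hu

theorem trace_evo {n : ℕ} (L : Evo n →ₗ[ℝ] Evo n) :
    LinearMap.trace ℝ (Evo n) L =
      (L (1, 0, 0)).1 + ∑ i, (L (0, Pi.single i 1, 0)).2.1 i
        + ∑ i, (L (0, 0, Pi.single i 1)).2.2 i := by
  classical
  set b : Module.Basis (Unit ⊕ (Fin n ⊕ Fin n)) ℝ (Evo n) :=
    (Module.Basis.singleton Unit ℝ).prod ((Pi.basisFun ℝ (Fin n)).prod (Pi.basisFun ℝ (Fin n)))
  rw [LinearMap.trace_eq_matrix_trace ℝ b L, Matrix.trace]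
  simp only [Fintype.sum_sum_type, Matrix.diag_apply, LinearMap.toMatrix_apply, b,
    Module.Basis.prod_apply, Module.Basis.prod_repr_inl, Module.Basis.prod_repr_inr, Pi.basisFun_apply,
    Pi.basisFun_repr, Module.Basis.singleton_apply, Module.Basis.singleton_repr, Finset.univ_unique,
    Finset.sum_singleton, Function.comp, LinearMap.coe_inl, LinearMap.coe_inr]
  simp [Sum.elim_inl, Sum.elim_inr, Module.Basis.prod_apply, Pi.basisFun_apply, Module.Basis.singleton_apply,
    Function.comp]
  simp only [Prod.mk_zero_zero]
  ring

/-- For the NSODE vector field `Γ(t,x,v) = (1, v, F(t,x,v))` and smooth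
functions `X⁰, X¹, …, Xⁿ` of `(t,x)` only, the prolonged vector field
`X^{(1)} = (X⁰, Xⁱ, X̄ⁱ)`, `X̄ⁱ = Γ(Xⁱ) − vⁱ·Γ(X⁰)`, satisfies
`div X^{(1)} = 2∑ᵢ(∂Xⁱ/∂xⁱ − vⁱ·∂X⁰/∂xⁱ) − (n−1)·Γ(X⁰)`. -/
theorem stmt_12 {n : ℕ} (F : Evo n → (Fin n → ℝ))
    (X0 : ℝ × (Fin n → ℝ) → ℝ) (Xv : ℝ × (Fin n → ℝ) → (Fin n → ℝ))
    (hF : ContDiff ℝ (⊤ : ℕ∞) F) (hX0 : ContDiff ℝ (⊤ : ℕ∞) X0) (hXv : ContDiff ℝ (⊤ : ℕ∞) Xv) :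
    ∀ p : Evo n,
      ediv (prolong F X0 Xv) p =
        2 * (∑ i, (fderiv ℝ (fun q => Xv q i) (p.1, p.2.1) (0, Pi.single i 1)
                - p.2.2 i * fderiv ℝ X0 (p.1, p.2.1) (0, Pi.single i 1)))
        - ((n : ℝ) - 1) * fderiv ℝ (fun q : Evo n => X0 (q.1, q.2.1)) p (nsode F p) := by
  intro p
  classical
  have hXvi : ∀ i, ContDiff ℝ (⊤ : ℕ∞) (fun q => Xv q i) := fun i => (contDiff_pi.mp hXv) i
  -- rewrite prolong as an F-free formula
  have hPro : prolong F X0 Xv = fun r : Evo n =>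
      (X0 (r.1, r.2.1), Xv (r.1, r.2.1),
        fun i => fderiv ℝ (fun q => Xv q i) (r.1, r.2.1) (1, r.2.2)
          - r.2.2 i * fderiv ℝ X0 (r.1, r.2.1) (1, r.2.2)) := by
    funext r
    have h1 : ∀ i, fderiv ℝ (fun q : Evo n => Xv (q.1, q.2.1) i) r (nsode F r)
        = fderiv ℝ (fun q => Xv q i) (r.1, r.2.1) (1, r.2.2) := by
      intro i
      rw [fderiv_comp_prL (fun q => Xv q i) (hXvi i) r]
      rfl
    have h0 : fderiv ℝ (fun q : Evo n => X0 (q.1, q.2.1)) r (nsode F r)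
        = fderiv ℝ X0 (r.1, r.2.1) (1, r.2.2) := by
      rw [fderiv_comp_prL X0 hX0 r]; rfl
    simp only [prolong, h0, h1]
  have h0p : fderiv ℝ (fun q : Evo n => X0 (q.1, q.2.1)) p (nsode F p)
      = fderiv ℝ X0 (p.1, p.2.1) (1, p.2.2) := by
    rw [fderiv_comp_prL X0 hX0 p]; rfl
  -- derivatives of the three components
  set q := (p.1, p.2.1) with hq
  set DA : Evo n →L[ℝ] ℝ := (fderiv ℝ X0 q).comp (prL n) with hDA
  set DB : Evo n →L[ℝ] (Fin n → ℝ) :=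
    ContinuousLinearMap.pi (fun i => (fderiv ℝ (fun r => Xv r i) q).comp (prL n)) with hDB
  set D0 : Evo n →L[ℝ] ℝ := (fderiv ℝ X0 q).comp (WL n)
      + ((fderiv ℝ (fderiv ℝ X0) q).comp (prL n)).flip (1, p.2.2) with hD0
  set Dv : Fin n → (Evo n →L[ℝ] ℝ) := fun i =>
    (fderiv ℝ (fun r => Xv r i) q).comp (WL n)
      + ((fderiv ℝ (fderiv ℝ (fun r => Xv r i)) q).comp (prL n)).flip (1, p.2.2) with hDv
  set Vi : Fin n → (Evo n →L[ℝ] ℝ) := fun i =>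
    (ContinuousLinearMap.proj i).comp
      ((ContinuousLinearMap.snd ℝ (Fin n → ℝ) (Fin n → ℝ)).comp
        (ContinuousLinearMap.snd ℝ ℝ ((Fin n → ℝ) × (Fin n → ℝ)))) with hVi
  set G0 : ℝ := fderiv ℝ X0 q (1, p.2.2) with hG0
  set DC : Evo n →L[ℝ] (Fin n → ℝ) :=
    ContinuousLinearMap.pi (fun i => Dv i - (p.2.2 i • D0 + G0 • Vi i)) with hDC
  have hA : HasFDerivAt (fun r : Evo n => X0 (r.1, r.2.1)) DA p :=
    ((hX0.differentiable (by simp)) q).hasFDerivAt.comp p (prL n).hasFDerivAt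
  have hB : HasFDerivAt (fun r : Evo n => Xv (r.1, r.2.1)) DB p := by
    refine hasFDerivAt_pi.2 fun i => ?_
    exact (((hXvi i).differentiable (by simp)) q).hasFDerivAt.comp p (prL n).hasFDerivAt
  have hvi : ∀ i, HasFDerivAt (fun r : Evo n => r.2.2 i) (Vi i) p :=
    fun i => (Vi i).hasFDerivAt
  have hC : HasFDerivAt (fun r : Evo n => fun i =>
      fderiv ℝ (fun s => Xv s i) (r.1, r.2.1) (1, r.2.2)
        - r.2.2 i * fderiv ℝ X0 (r.1, r.2.1) (1, r.2.2)) DC p := by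
    refine hasFDerivAt_pi.2 fun i => ?_
    exact (key_hasFDerivAt (fun s => Xv s i) (hXvi i) p).sub
      ((hvi i).mul (key_hasFDerivAt X0 hX0 p))
  have hP : HasFDerivAt (prolong F X0 Xv) (DA.prod (DB.prod DC)) p := by
    rw [hPro]
    exact hA.prodMk (hB.prodMk hC)
  rw [ediv, hP.fderiv, trace_evo]
  simp only [ContinuousLinearMap.coe_coe, ContinuousLinearMap.prod_apply,
    ContinuousLinearMap.pi_apply, ContinuousLinearMap.comp_apply, ContinuousLinearMap.add_apply,
    ContinuousLinearMap.sub_apply, ContinuousLinearMap.smul_apply, ContinuousLinearMap.flip_apply,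
    ContinuousLinearMap.proj_apply, ContinuousLinearMap.coe_fst', ContinuousLinearMap.coe_snd',
    WL_apply, prL_apply]
  have e1 : DA (1, 0, 0) = fderiv ℝ X0 q ((1 : ℝ), (0 : Fin n → ℝ)) := rfl
  have e2 : ∀ i, DB ((0 : ℝ), Pi.single i 1, (0 : Fin n → ℝ)) i
      = fderiv ℝ (fun r => Xv r i) q (0, Pi.single i 1) := fun i => rfl
  have e3 : ∀ i, DC ((0 : ℝ), (0 : Fin n → ℝ), Pi.single i 1) i
      = fderiv ℝ (fun r => Xv r i) q (0, Pi.single i 1)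
        - (p.2.2 i * fderiv ℝ X0 q (0, Pi.single i 1) + G0) := by
    intro i
    have hz : (prL n) (((0 : ℝ), (0 : Fin n → ℝ), Pi.single i 1) : Evo n) = 0 := rfl
    simp only [hDC, ContinuousLinearMap.pi_apply, ContinuousLinearMap.sub_apply,
      ContinuousLinearMap.add_apply, ContinuousLinearMap.smul_apply, hDv, hD0, hVi,
      ContinuousLinearMap.comp_apply, ContinuousLinearMap.flip_apply, hz, map_zero,
      ContinuousLinearMap.zero_apply, WL_apply, ContinuousLinearMap.proj_apply,
      ContinuousLinearMap.coe_snd', smul_eq_mul, add_zero, Pi.single_eq_same, mul_one]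
  rw [e1, Finset.sum_congr rfl (fun i _ => e2 i), Finset.sum_congr rfl (fun i _ => e3 i), h0p]
  have hsum2 : (fderiv ℝ X0 q) ((0:ℝ), p.2.2)
      = ∑ i, p.2.2 i * fderiv ℝ X0 q (0, Pi.single i 1) := by
    have h : ((0:ℝ), p.2.2) = ∑ i, p.2.2 i • (((0:ℝ), Pi.single i (1:ℝ)) : ℝ × (Fin n → ℝ)) := by
      apply Prod.ext
      · simp [Prod.fst_sum]
      · simp only [Prod.snd_sum, Prod.smul_snd]
        funext j
        simp [Finset.sum_apply, Pi.single_apply, Finset.sum_ite_eq']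
    rw [h, map_sum]
    exact Finset.sum_congr rfl fun i _ => by rw [map_smul, smul_eq_mul]
  have hone : ((1:ℝ), p.2.2) = ((1:ℝ), (0 : Fin n → ℝ)) + ((0:ℝ), p.2.2) := by simp
  have hG : G0 = fderiv ℝ X0 q ((1 : ℝ), (0 : Fin n → ℝ))
      + ∑ i, p.2.2 i * fderiv ℝ X0 q (0, Pi.single i 1) := by
    rw [hG0, hone, map_add, hsum2]
  rw [Finset.sum_sub_distrib, Finset.sum_add_distrib, Finset.sum_sub_distrib,
    Finset.sum_const, Finset.card_univ, Fintype.card_fin, nsmul_eq_mul]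
  linear_combination -hG
end
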